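/- arXiv:1808.06544 — 4 statements merged into one kernel-verified Lean document; each statement's English description precedes it below -/
import Mathlib

section
/- For fixed ε, the log-likelihood Ω is differentiable as a function of the core-score vector θ ∈ ℝⁿ, and for every vertex w the partial derivative of Ω with respect to θ w equals (Σ_{u ≠ w} A u w) − (Σ_{u ≠ w} ρ u w), i.e., the degree of w in the input network minus the expected degree of w under the model. -/
/-!
Each summand of `Ω` is the Bernoulli log-likelihood of a logistic model in `s = θ u + θ v`:
with `k = (K u v) ^ ε > 0`, `a log σ + (1 - a) log (1 - σ) = a s + (1 - a) log k - log (eˢ + k)`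
for `σ = eˢ / (eˢ + k)`, whose derivative in `s` is `a - σ`. Hence `Ω` is differentiable, and by
the chain rule the pair `{u, v}` contributes `A u v - ρ u v` to `∂Ω/∂θ w` exactly when `w ∈ {u, v}`;
by the symmetry of `A` and `K` these contributions add up to `Σ_{u ≠ w} (A u w - ρ u w)`.
-/

open Real Finset

/-- Edge probability of the spatial core-periphery model:
`ρ u v = exp (θ u + θ v) / (exp (θ u + θ v) + (K u v) ^ ε)`. -/
noncomputable def edgeProb {n : ℕ} (K : Fin n → Fin n → ℝ) (θ : Fin n → ℝ) (ε : ℝ)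
    (u v : Fin n) : ℝ :=
  exp (θ u + θ v) / (exp (θ u + θ v) + (K u v) ^ ε)

/-- Log-likelihood `Ω(θ, ε) = Σ_{u < v} [A u v * log ρ u v + (1 - A u v) * log (1 - ρ u v)]`. -/
noncomputable def logLik {n : ℕ} (A K : Fin n → Fin n → ℝ) (θ : Fin n → ℝ) (ε : ℝ) : ℝ :=
  ∑ p ∈ univ.filter (fun p : Fin n × Fin n => p.1 < p.2),
    (A p.1 p.2 * log (edgeProb K θ ε p.1 p.2) +
      (1 - A p.1 p.2) * log (1 - edgeProb K θ ε p.1 p.2))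

noncomputable def bernoulliLogLik (a q : ℝ) : ℝ :=
  a * log q + (1 - a) * log (1 - q)

lemma bernoulliLogLik_logistic (a s : ℝ) {k : ℝ} (hk : 0 < k) :
    bernoulliLogLik a (exp s / (exp s + k)) = a * s + (1 - a) * log k - log (exp s + k) := by
  have hpos : 0 < exp s + k := by positivity
  have hcompl : 1 - exp s / (exp s + k) = k / (exp s + k) := by
    field_simp
    ring
  rw [bernoulliLogLik, hcompl, log_div (exp_pos s).ne' hpos.ne', log_div hk.ne' hpos.ne', log_exp]
  ring

lemma hasDerivAt_bernoulliLogLik_logistic (a : ℝ) {k : ℝ} (hk : 0 < k) (s : ℝ) :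
    HasDerivAt (fun s => bernoulliLogLik a (exp s / (exp s + k)))
      (a - exp s / (exp s + k)) s := by
  simp_rw [bernoulliLogLik_logistic a _ hk]
  have hlog := ((hasDerivAt_exp s).add_const k).log (by positivity)
  simpa using (((hasDerivAt_id s).const_mul a).add_const ((1 - a) * log k)).fun_sub hlog

lemma sum_lt_mul_single_add_single {ι R : Type*} [Fintype ι] [LinearOrder ι]
    [NonAssocSemiring R] (h : ι → ι → R) (hh : ∀ u v, h u v = h v u) (w : ι) :
    ∑ p ∈ univ.filter (fun p : ι × ι => p.1 < p.2),
        h p.1 p.2 * (Pi.single (M := fun _ => R) w 1 p.1 + Pi.single (M := fun _ => R) w 1 p.2)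
      = ∑ u ∈ univ.filter (· ≠ w), h u w := by
  simp only [sum_filter, Fintype.sum_prod_type, mul_add, Pi.single_apply, mul_ite, mul_one,
    mul_zero, sum_add_distrib, ← ite_and]
  rw [sum_comm]
  simp only [and_comm, ite_and, sum_ite_eq', mem_univ, if_true, hh w, ← sum_add_distrib]
  refine sum_congr rfl fun u _ => ?_
  rcases lt_trichotomy u w with huw | rfl | huw
  · simp [huw, huw.ne, huw.not_gt]
  · simp
  · simp [huw, huw.ne', huw.not_gt]

section CorePeriphery

variable {n : ℕ} {K : Fin n → Fin n → ℝ}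

lemma edgeProb_comm (hK : ∀ u v, K u v = K v u) (θ : Fin n → ℝ) (ε : ℝ) (u v : Fin n) :
    edgeProb K θ ε u v = edgeProb K θ ε v u := by
  rw [edgeProb, edgeProb, add_comm (θ u), hK]

lemma hasFDerivAt_bernoulliLogLik_edgeProb (a ε : ℝ) {u v : Fin n} (huv : 0 < K u v)
    (θ : Fin n → ℝ) :
    HasFDerivAt (fun θ => bernoulliLogLik a (edgeProb K θ ε u v))
      ((a - edgeProb K θ ε u v) •
        (ContinuousLinearMap.proj (R := ℝ) (φ := fun _ : Fin n => ℝ) u +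
          ContinuousLinearMap.proj v)) θ := by
  have hsum : HasFDerivAt (fun θ : Fin n → ℝ => θ u + θ v)
      (ContinuousLinearMap.proj (R := ℝ) (φ := fun _ : Fin n => ℝ) u +
        ContinuousLinearMap.proj v) θ :=
    (hasFDerivAt_apply u θ).fun_add (hasFDerivAt_apply v θ)
  exact (hasDerivAt_bernoulliLogLik_logistic a (rpow_pos_of_pos huv ε) (θ u + θ v)).comp_hasFDerivAt
    θ hsum

lemma hasFDerivAt_logLik (A : Fin n → Fin n → ℝ) (hK : ∀ u v : Fin n, u ≠ v → 0 < K u v)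
    (ε : ℝ) (θ : Fin n → ℝ) :
    HasFDerivAt (fun θ => logLik A K θ ε)
      (∑ p ∈ univ.filter (fun p : Fin n × Fin n => p.1 < p.2),
        (A p.1 p.2 - edgeProb K θ ε p.1 p.2) •
          (ContinuousLinearMap.proj (R := ℝ) (φ := fun _ : Fin n => ℝ) p.1 +
            ContinuousLinearMap.proj p.2)) θ :=
  HasFDerivAt.fun_sum fun _ hp =>
    hasFDerivAt_bernoulliLogLik_edgeProb _ ε (hK _ _ (mem_filter.1 hp).2.ne) θ

end CorePeriphery

theorem logLik_deriv_core_score_general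
    (n : ℕ) (A K : Fin n → Fin n → ℝ)
    (hAsymm : ∀ u v, A u v = A v u)
    (hKsymm : ∀ u v, K u v = K v u) (hKpos : ∀ u v : Fin n, u ≠ v → 0 < K u v)
    (ε : ℝ) :
    Differentiable ℝ (fun θ : Fin n → ℝ => logLik A K θ ε) ∧
    ∀ (θ : Fin n → ℝ) (w : Fin n),
      HasDerivAt (fun t : ℝ => logLik A K (Function.update θ w t) ε)
        ((∑ u ∈ univ.filter (· ≠ w), A u w) -
          ∑ u ∈ univ.filter (· ≠ w), edgeProb K θ ε u w) (θ w) := by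
  refine ⟨fun θ => (hasFDerivAt_logLik A hKpos ε θ).differentiableAt, fun θ w => ?_⟩
  have hpartial := (hasFDerivAt_logLik A hKpos ε (Function.update θ w (θ w))).comp_hasDerivAt
    (θ w) (hasDerivAt_update θ w (θ w))
  rw [Function.update_eq_self] at hpartial
  refine hpartial.congr_deriv ?_
  rw [← sum_sub_distrib, ← sum_lt_mul_single_add_single (fun u v => A u v - edgeProb K θ ε u v)
    (fun u v => by rw [hAsymm, edgeProb_comm hKsymm]) w]
  simp [mul_add]

/-- For fixed `ε`, the log-likelihood `Ω` is differentiable as a function of the core-score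
vector `θ ∈ ℝⁿ`, and for every vertex `w` the partial derivative of `Ω` with respect to
`θ w` equals `(Σ_{u ≠ w} A u w) - (Σ_{u ≠ w} ρ u w)`: the degree of `w` in the input network
minus the expected degree of `w` under the model. -/
theorem logLik_deriv_core_score
    (n : ℕ) (A K : Fin n → Fin n → ℝ)
    (hA : ∀ u v, A u v = 0 ∨ A u v = 1) (hAsymm : ∀ u v, A u v = A v u)
    (hAdiag : ∀ u, A u u = 0)
    (hKsymm : ∀ u v, K u v = K v u) (hKpos : ∀ u v : Fin n, u ≠ v → 0 < K u v)
    (ε : ℝ) :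
    Differentiable ℝ (fun θ : Fin n → ℝ => logLik A K θ ε) ∧
    ∀ (θ : Fin n → ℝ) (w : Fin n),
      HasDerivAt (fun t : ℝ => logLik A K (Function.update θ w t) ε)
        ((∑ u ∈ univ.filter (· ≠ w), A u w) -
          ∑ u ∈ univ.filter (· ≠ w), edgeProb K θ ε u w) (θ w) :=
  logLik_deriv_core_score_general n A K hAsymm hKsymm hKpos ε
end

section
/- Fix ε. If θ* ∈ ℝⁿ is a local maximizer of the map θ ↦ Ω(θ, ε), then the expected total number of edges under the model equals the number of edges of the input network: Σ_{u < v} ρ u v = Σ_{u < v} A u v. -/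
open Real Finset

/-!
Shifting every core score by the same `t` multiplies each odds ratio `ρ / (1 - ρ)` by `exp (2 t)`.
Along this direction `Ω` is a sum of logistic log-likelihoods in `θ u + θ v + 2 t`, whose derivative
at `t = 0` is the logistic score `2 Σ_{u < v} (A u v - ρ u v)`. At a local maximum it vanishes.
-/

lemma logistic_logLikelihood_eq (a x : ℝ) {k : ℝ} (hk : 0 < k) :
    a * log (exp x / (exp x + k)) + (1 - a) * log (1 - exp x / (exp x + k)) =
      a * x + (1 - a) * log k - log (exp x + k) := by
  have hpos : 0 < exp x + k := by positivity
  have hcompl : 1 - exp x / (exp x + k) = k / (exp x + k) := by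
    field_simp
    ring
  rw [hcompl, log_div (exp_ne_zero x) hpos.ne', log_div hk.ne' hpos.ne', log_exp]
  ring

lemma hasDerivAt_logistic_logLikelihood (a x : ℝ) {k : ℝ} (hk : 0 < k) :
    HasDerivAt
      (fun y => a * log (exp y / (exp y + k)) + (1 - a) * log (1 - exp y / (exp y + k)))
      (a - exp x / (exp x + k)) x := by
  simp only [logistic_logLikelihood_eq a _ hk]
  have hlin : HasDerivAt (fun y => a * y + (1 - a) * log k) a x := by
    simpa using ((hasDerivAt_id x).const_mul a).add_const ((1 - a) * log k)
  exact hlin.sub (((hasDerivAt_exp x).add_const k).log (add_pos (exp_pos x) hk).ne')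

lemma hasDerivAt_logLik_shift {n : ℕ} (A K : Fin n → Fin n → ℝ) (ε : ℝ) (θ : Fin n → ℝ)
    (hK : ∀ u v : Fin n, u ≠ v → 0 < K u v) :
    HasDerivAt (fun t : ℝ => logLik A K (fun u => θ u + t) ε)
      (2 * ∑ p ∈ univ.filter (fun p : Fin n × Fin n => p.1 < p.2),
        (A p.1 p.2 - edgeProb K θ ε p.1 p.2)) 0 := by
  rw [mul_sum]
  refine HasDerivAt.fun_sum fun p hp => ?_
  have hk : 0 < K p.1 p.2 ^ ε := rpow_pos_of_pos (hK _ _ (mem_filter.mp hp).2.ne) ε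
  have hpair : HasDerivAt (fun t : ℝ => θ p.1 + t + (θ p.2 + t)) (1 + 1) 0 :=
    ((hasDerivAt_id 0).const_add (θ p.1)).add ((hasDerivAt_id 0).const_add (θ p.2))
  refine ((hasDerivAt_logistic_logLikelihood (A p.1 p.2) _ hk).comp 0 hpair).congr_deriv ?_
  simp only [edgeProb, add_zero]
  ring

theorem expected_edge_count_eq_of_isLocalMax_general
    (n : ℕ) (A K : Fin n → Fin n → ℝ)
    (hKpos : ∀ u v : Fin n, u ≠ v → 0 < K u v)
    (ε : ℝ) (θ : Fin n → ℝ)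
    (hmax : IsLocalMax (fun θ : Fin n → ℝ => logLik A K θ ε) θ) :
    ∑ p ∈ univ.filter (fun p : Fin n × Fin n => p.1 < p.2), edgeProb K θ ε p.1 p.2 =
      ∑ p ∈ univ.filter (fun p : Fin n × Fin n => p.1 < p.2), A p.1 p.2 := by
  have hshift : IsLocalMax (fun t : ℝ => logLik A K (fun u => θ u + t) ε) 0 :=
    IsLocalMax.comp_continuous (f := fun θ : Fin n → ℝ => logLik A K θ ε)
      (g := fun t u => θ u + t) (b := 0) (by simpa using hmax) (by fun_prop)
  have hcrit := hshift.hasDerivAt_eq_zero (hasDerivAt_logLik_shift A K ε θ hKpos)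
  rw [mul_eq_zero, sum_sub_distrib, sub_eq_zero] at hcrit
  exact (hcrit.resolve_left two_ne_zero).symm

/-- Fix `ε`. If `θ*` is a local maximizer of `θ ↦ Ω(θ, ε)`, then the expected total number
of edges under the model equals the number of edges of the input network:
`Σ_{u < v} ρ u v = Σ_{u < v} A u v`. -/
theorem expected_edge_count_eq_of_isLocalMax
    (n : ℕ) (A K : Fin n → Fin n → ℝ)
    (hA : ∀ u v, A u v = 0 ∨ A u v = 1) (hAsymm : ∀ u v, A u v = A v u)
    (hAdiag : ∀ u, A u u = 0)
    (hKsymm : ∀ u v, K u v = K v u) (hKpos : ∀ u v : Fin n, u ≠ v → 0 < K u v)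
    (ε : ℝ) (θ : Fin n → ℝ)
    (hmax : IsLocalMax (fun θ : Fin n → ℝ => logLik A K θ ε) θ) :
    ∑ p ∈ univ.filter (fun p : Fin n × Fin n => p.1 < p.2), edgeProb K θ ε p.1 p.2 =
      ∑ p ∈ univ.filter (fun p : Fin n × Fin n => p.1 < p.2), A p.1 p.2 :=
  expected_edge_count_eq_of_isLocalMax_general n A K hKpos ε θ hmax
end

section
/- For fixed core scores θ, the log-likelihood Ω is differentiable as a function of ε ∈ ℝ, and its derivative equals − Σ_{u < v} A u v · log(K u v) + Σ_{u < v} ρ u v · log(K u v), i.e., the negative of the aggregated log-distance of the input network plus the expected aggregated log-distance under the model. -/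
/-! Each pair `u < v` contributes a Bernoulli log-likelihood `a log ρ + (1 - a) log (1 - ρ)`
with `ρ = c / (c + k ^ ε)`. Both `log ρ` and `log (1 - ρ)` are affine in `ε` up to the common
term `- log (c + k ^ ε)`, whose derivative is `-(1 - ρ) log k`; hence the pair's derivative is
`(ρ - a) log k`, and summing over pairs gives the theorem. -/

open Real Finset

lemma hasDerivAt_log_add_rpow {c k : ℝ} (hc : 0 < c) (hk : 0 < k) (ε : ℝ) :
    HasDerivAt (fun e : ℝ => log (c + k ^ e)) (k ^ ε / (c + k ^ ε) * log k) ε := by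
  convert ((hasStrictDerivAt_const_rpow hk ε).hasDerivAt.const_add c).log (by positivity)
    using 1
  ring

lemma bernoulli_logLik_eq {c k : ℝ} (hc : 0 < c) (hk : 0 < k) (a e : ℝ) :
    a * log (c / (c + k ^ e)) + (1 - a) * log (1 - c / (c + k ^ e)) =
      a * log c + (1 - a) * (e * log k) - log (c + k ^ e) := by
  have hsum : c + k ^ e ≠ 0 := by positivity
  have hcompl : 1 - c / (c + k ^ e) = k ^ e / (c + k ^ e) := by
    field_simp
    ring
  rw [hcompl, log_div hc.ne' hsum, log_div (by positivity) hsum, log_rpow hk]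
  ring

lemma hasDerivAt_bernoulli_logLik {c k : ℝ} (hc : 0 < c) (hk : 0 < k) (a ε : ℝ) :
    HasDerivAt (fun e : ℝ => a * log (c / (c + k ^ e)) + (1 - a) * log (1 - c / (c + k ^ e)))
      ((c / (c + k ^ ε) - a) * log k) ε := by
  simp only [bernoulli_logLik_eq hc hk]
  have hlin : HasDerivAt (fun e : ℝ => a * log c + (1 - a) * (e * log k))
      ((1 - a) * log k) ε := by
    simpa using (((hasDerivAt_id ε).mul_const (log k)).const_mul (1 - a)).const_add (a * log c)
  refine (hlin.fun_sub (hasDerivAt_log_add_rpow hc hk ε)).congr_deriv ?_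
  have hsum : c + k ^ ε ≠ 0 := by positivity
  field_simp
  ring

theorem logLik_deriv_epsilon_general
    (n : ℕ) (A K : Fin n → Fin n → ℝ)
    (hKpos : ∀ u v : Fin n, u ≠ v → 0 < K u v)
    (θ : Fin n → ℝ) :
    Differentiable ℝ (fun ε : ℝ => logLik A K θ ε) ∧
    ∀ ε : ℝ,
      HasDerivAt (fun e : ℝ => logLik A K θ e)
        (-(∑ p ∈ univ.filter (fun p : Fin n × Fin n => p.1 < p.2),
              A p.1 p.2 * log (K p.1 p.2)) +
          ∑ p ∈ univ.filter (fun p : Fin n × Fin n => p.1 < p.2),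
            edgeProb K θ ε p.1 p.2 * log (K p.1 p.2)) ε := by
  have hderiv : ∀ ε : ℝ, HasDerivAt (fun e : ℝ => logLik A K θ e)
      (∑ p ∈ univ.filter (fun p : Fin n × Fin n => p.1 < p.2),
        (edgeProb K θ ε p.1 p.2 - A p.1 p.2) * log (K p.1 p.2)) ε := fun ε =>
    HasDerivAt.fun_sum fun p hp =>
      hasDerivAt_bernoulli_logLik (exp_pos _) (hKpos _ _ (mem_filter.mp hp).2.ne) _ ε
  refine ⟨fun ε => (hderiv ε).differentiableAt, fun ε => ?_⟩
  convert hderiv ε using 1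
  simp only [sub_mul, sum_sub_distrib]
  ring

/-- For fixed core scores `θ`, the log-likelihood `Ω` is differentiable as a function of
`ε ∈ ℝ`, and its derivative equals
`- Σ_{u < v} A u v * log (K u v) + Σ_{u < v} ρ u v * log (K u v)`: the negative of the
aggregated log-distance of the input network plus the expected aggregated log-distance
under the model. -/
theorem logLik_deriv_epsilon
    (n : ℕ) (A K : Fin n → Fin n → ℝ)
    (hA : ∀ u v, A u v = 0 ∨ A u v = 1) (hAsymm : ∀ u v, A u v = A v u)
    (hAdiag : ∀ u, A u u = 0)
    (hKsymm : ∀ u v, K u v = K v u) (hKpos : ∀ u v : Fin n, u ≠ v → 0 < K u v)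
    (θ : Fin n → ℝ) :
    Differentiable ℝ (fun ε : ℝ => logLik A K θ ε) ∧
    ∀ ε : ℝ,
      HasDerivAt (fun e : ℝ => logLik A K θ e)
        (-(∑ p ∈ univ.filter (fun p : Fin n × Fin n => p.1 < p.2),
              A p.1 p.2 * log (K p.1 p.2)) +
          ∑ p ∈ univ.filter (fun p : Fin n × Fin n => p.1 < p.2),
            edgeProb K θ ε p.1 p.2 * log (K p.1 p.2)) ε :=
  logLik_deriv_epsilon_general n A K hKpos θ
end

section
/- Fix core scores θ. If ε* ∈ ℝ is a local maximizer of the map ε ↦ Ω(θ, ε), then the expected aggregated log-distance under the model evaluated at ε* equals the aggregated log-distance of the input network: Σ_{u < v} ρ u v · log(K u v) = Σ_{u < v} A u v · log(K u v). -/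
open Real Finset

/-! The score equation `∂Ω/∂ε = 0` reads `Σ (ρ u v - A u v) log K u v = 0`: writing `k = K u v`,
`x = exp (θ u + θ v)`, each summand of `Ω` is `a log x + (1 - a) ε log k - log (x + k ^ ε)`,
whose `ε`-derivative is `(ρ - a) log k`. -/

lemma bernoulli_logLik_rpow_eq (s k a e : ℝ) (hk : 0 < k) :
    a * log (exp s / (exp s + k ^ e)) + (1 - a) * log (1 - exp s / (exp s + k ^ e)) =
      a * s + (1 - a) * log k * e - log (exp s + k ^ e) := by
  have hke : 0 < k ^ e := rpow_pos_of_pos hk e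
  have hD : 0 < exp s + k ^ e := by positivity
  rw [one_sub_div hD.ne', add_sub_cancel_left, log_div (exp_pos s).ne' hD.ne',
    log_div hke.ne' hD.ne', log_exp, log_rpow hk]
  ring

lemma hasDerivAt_bernoulli_logLik_rpow (s k a ε : ℝ) (hk : 0 < k) :
    HasDerivAt (fun e : ℝ =>
        a * log (exp s / (exp s + k ^ e)) + (1 - a) * log (1 - exp s / (exp s + k ^ e)))
      ((exp s / (exp s + k ^ ε) - a) * log k) ε := by
  simp_rw [bernoulli_logLik_rpow_eq s k a _ hk]
  have hD : exp s + k ^ ε ≠ 0 := by positivity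
  have hlinear : HasDerivAt (fun e : ℝ => a * s + (1 - a) * log k * e) ((1 - a) * log k) ε := by
    simpa using ((hasDerivAt_id ε).const_mul ((1 - a) * log k)).const_add (a * s)
  have hlog : HasDerivAt (fun e : ℝ => log (exp s + k ^ e)) (k ^ ε * log k / (exp s + k ^ ε)) ε :=
    ((hasStrictDerivAt_const_rpow hk ε).hasDerivAt.const_add (exp s)).log hD
  refine (hlinear.sub hlog).congr_deriv ?_
  field_simp
  ring

lemma hasDerivAt_logLik {n : ℕ} (A K : Fin n → Fin n → ℝ) (θ : Fin n → ℝ) (ε : ℝ)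
    (hK : ∀ u v : Fin n, u < v → 0 < K u v) :
    HasDerivAt (logLik A K θ)
      (∑ p ∈ univ.filter (fun p : Fin n × Fin n => p.1 < p.2),
        (edgeProb K θ ε p.1 p.2 - A p.1 p.2) * log (K p.1 p.2)) ε := by
  unfold logLik edgeProb
  exact HasDerivAt.fun_sum fun p hp =>
    hasDerivAt_bernoulli_logLik_rpow _ _ _ _ (hK p.1 p.2 (mem_filter.mp hp).2)

theorem expected_aggregated_log_distance_eq_of_isLocalMax_general
    (n : ℕ) (A K : Fin n → Fin n → ℝ)
    (hKpos : ∀ u v : Fin n, u ≠ v → 0 < K u v)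
    (θ : Fin n → ℝ) (ε : ℝ)
    (hmax : IsLocalMax (fun e : ℝ => logLik A K θ e) ε) :
    ∑ p ∈ univ.filter (fun p : Fin n × Fin n => p.1 < p.2),
        edgeProb K θ ε p.1 p.2 * log (K p.1 p.2) =
      ∑ p ∈ univ.filter (fun p : Fin n × Fin n => p.1 < p.2),
        A p.1 p.2 * log (K p.1 p.2) := by
  have hscore := hmax.hasDerivAt_eq_zero (hasDerivAt_logLik A K θ ε fun u v h => hKpos u v h.ne)
  simpa only [sub_mul, sum_sub_distrib, sub_eq_zero] using hscore

/-- Fix core scores `θ`. If `ε*` is a local maximizer of `ε ↦ Ω(θ, ε)`, then the expected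
aggregated log-distance under the model evaluated at `ε*` equals the aggregated
log-distance of the input network:
`Σ_{u < v} ρ u v * log (K u v) = Σ_{u < v} A u v * log (K u v)`. -/
theorem expected_aggregated_log_distance_eq_of_isLocalMax
    (n : ℕ) (A K : Fin n → Fin n → ℝ)
    (hA : ∀ u v, A u v = 0 ∨ A u v = 1) (hAsymm : ∀ u v, A u v = A v u)
    (hAdiag : ∀ u, A u u = 0)
    (hKsymm : ∀ u v, K u v = K v u) (hKpos : ∀ u v : Fin n, u ≠ v → 0 < K u v)
    (θ : Fin n → ℝ) (ε : ℝ)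
    (hmax : IsLocalMax (fun e : ℝ => logLik A K θ e) ε) :
    ∑ p ∈ univ.filter (fun p : Fin n × Fin n => p.1 < p.2),
        edgeProb K θ ε p.1 p.2 * log (K p.1 p.2) =
      ∑ p ∈ univ.filter (fun p : Fin n × Fin n => p.1 < p.2),
        A p.1 p.2 * log (K p.1 p.2) :=
  expected_aggregated_log_distance_eq_of_isLocalMax_general n A K hKpos θ ε hmax
end
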